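/- Under the Kaluza-Klein hypotheses with Vielbein E^a_α = e^a_α, E^2_2 = √ε, E^2_α = √ε φ_α, E^a_2 = 0 and inverse Vielbein Ẽ^α_a = ẽ^α_a, Ẽ^2_2 = 1/√ε, Ẽ^2_a = −φ_ζ ẽ^ζ_a, Ẽ^α_2 = 0, the spin connection component [A_α]^a_2 := E^a_ν Ẽ^λ_2 Γ^ν_{αλ} − Ẽ^λ_2 ∂_α E^a_λ equals (√ε/2) e^a_δ h^{δζ} f_{αζ}, where f_{αζ} = ∂_α φ_ζ − ∂_ζ φ_α. -/

import Mathlib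

open Matrix

/-- Partial derivative in coordinate direction `μ` on ℝ³. -/
noncomputable def pd (μ : Fin 3) (F : (Fin 3 → ℝ) → ℝ) (x : Fin 3 → ℝ) : ℝ :=
  fderiv ℝ F x (Pi.single μ 1)

/-- The Kaluza-Klein metric `G` with `G_{αβ} = h_{αβ} + ε φ_α φ_β`,
`G_{α2} = G_{2α} = ε φ_α`, `G_{22} = ε`. -/
noncomputable def KK (ε : ℝ) (h : Matrix (Fin 2) (Fin 2) ℝ) (φ : Fin 2 → ℝ) :
    Matrix (Fin 3) (Fin 3) ℝ :=
  Matrix.of fun μ ν =>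
    if hμ : (μ : ℕ) < 2 then
      if hν : (ν : ℕ) < 2 then h ⟨(μ : ℕ), hμ⟩ ⟨(ν : ℕ), hν⟩ + ε * φ ⟨(μ : ℕ), hμ⟩ * φ ⟨(ν : ℕ), hν⟩
      else ε * φ ⟨(μ : ℕ), hμ⟩
    else if hν : (ν : ℕ) < 2 then ε * φ ⟨(ν : ℕ), hν⟩ else ε

/-- Christoffel symbols `Γ^λ_{μν} = (1/2) G^{λρ}(∂_ν G_{ρμ} + ∂_μ G_{ρν} − ∂_ρ G_{μν})`. -/
noncomputable def chris (G : (Fin 3 → ℝ) → Matrix (Fin 3) (Fin 3) ℝ)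
    (x : Fin 3 → ℝ) (l μ ν : Fin 3) : ℝ :=
  (1/2) * ∑ ρ, (G x)⁻¹ l ρ *
    (pd ν (fun y => G y ρ μ) x + pd μ (fun y => G y ρ ν) x - pd ρ (fun y => G y μ ν) x)

/-- Abelian field strength `f_{αβ} = ∂_α φ_β − ∂_β φ_α` (base indices). -/
noncomputable def fs (φf : (Fin 3 → ℝ) → Fin 2 → ℝ) (x : Fin 3 → ℝ) (α β : Fin 2) : ℝ :=
  pd α.castSucc (fun y => φf y β) x - pd β.castSucc (fun y => φf y α) x

/-- Christoffel symbols `γ^δ_{αβ}` of the base metric `h`. -/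
noncomputable def gam (hm : (Fin 3 → ℝ) → Matrix (Fin 2) (Fin 2) ℝ)
    (x : Fin 3 → ℝ) (δ α β : Fin 2) : ℝ :=
  (1/2) * ∑ ζ, (hm x)⁻¹ δ ζ *
    (pd β.castSucc (fun y => hm y ζ α) x + pd α.castSucc (fun y => hm y ζ β) x
      - pd ζ.castSucc (fun y => hm y α β) x)


/-- The Vielbein `E^A_μ` (row index A, column index μ):
`E^a_α = e^a_α`, `E^2_2 = √ε`, `E^2_α = √ε φ_α`, `E^a_2 = 0`. -/
noncomputable def Emat (ε : ℝ) (e : Matrix (Fin 2) (Fin 2) ℝ) (φ : Fin 2 → ℝ) :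
    Matrix (Fin 3) (Fin 3) ℝ :=
  !![e 0 0, e 0 1, 0;
     e 1 0, e 1 1, 0;
     Real.sqrt ε * φ 0, Real.sqrt ε * φ 1, Real.sqrt ε]

/-- The inverse Vielbein `Ẽ^μ_A` (row index μ, column index A):
`Ẽ^α_a = ẽ^α_a`, `Ẽ^2_2 = 1/√ε`, `Ẽ^2_a = −φ_ζ ẽ^ζ_a`, `Ẽ^α_2 = 0`. -/
noncomputable def Etmat (ε : ℝ) (e : Matrix (Fin 2) (Fin 2) ℝ) (φ : Fin 2 → ℝ) :
    Matrix (Fin 3) (Fin 3) ℝ :=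
  !![e⁻¹ 0 0, e⁻¹ 0 1, 0;
     e⁻¹ 1 0, e⁻¹ 1 1, 0;
     -(φ 0 * e⁻¹ 0 0 + φ 1 * e⁻¹ 1 0), -(φ 0 * e⁻¹ 0 1 + φ 1 * e⁻¹ 1 1),
       (Real.sqrt ε)⁻¹]

/-- The spin connection `[A_μ]^A_B = E^A_ν Ẽ^λ_B Γ^ν_{μλ} − Ẽ^λ_B ∂_μ E^A_λ`. -/
noncomputable def spinConn (ε : ℝ) (hm : (Fin 3 → ℝ) → Matrix (Fin 2) (Fin 2) ℝ)
    (φf : (Fin 3 → ℝ) → Fin 2 → ℝ) (em : (Fin 3 → ℝ) → Matrix (Fin 2) (Fin 2) ℝ)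
    (μ A B : Fin 3) (x : Fin 3 → ℝ) : ℝ :=
  (∑ ν, ∑ lam, Emat ε (em x) (φf x) A ν * Etmat ε (em x) (φf x) lam B *
      chris (fun y => KK ε (hm y) (φf y)) x ν μ lam)
    - ∑ lam, Etmat ε (em x) (φf x) lam B * pd μ (fun y => Emat ε (em y) (φf y) A lam) x


/-!
Since `E^a_2 = 0` and `Ẽ^λ_2` vanishes except for `Ẽ^2_2 = 1/√ε`, the component reduces to
`[A_α]^a_2 = ε^{-1/2} e^a_β Γ^β_{α2}`, the derivative term being `∂_α` of the constant `E^a_2 = 0`.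
The inverse metric has rows `G^{βρ} = h^{βρ}`, `G^{β2} = -h^{βζ} φ_ζ`, and as nothing depends on `x²`,
`Γ^β_{α2} = ½ G^{βρ}(∂_α G_{ρ2} - ∂_ρ G_{α2}) = (ε/2) h^{βρ} f_{αρ}`.
-/

/-- `G^{αβ} = h^{αβ}`, `G^{α2} = G^{2α} = -h^{αζ} φ_ζ`, `G^{22} = ε⁻¹ + φ_ζ h^{ζη} φ_η`. -/
noncomputable def KKinv (ε : ℝ) (h : Matrix (Fin 2) (Fin 2) ℝ) (φ : Fin 2 → ℝ) :
    Matrix (Fin 3) (Fin 3) ℝ :=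
  Matrix.of fun μ ν =>
    if hμ : (μ : ℕ) < 2 then
      if hν : (ν : ℕ) < 2 then h⁻¹ ⟨(μ : ℕ), hμ⟩ ⟨(ν : ℕ), hν⟩
      else -(∑ ζ, h⁻¹ ⟨(μ : ℕ), hμ⟩ ζ * φ ζ)
    else if hν : (ν : ℕ) < 2 then -(∑ ζ, φ ζ * h⁻¹ ζ ⟨(ν : ℕ), hν⟩)
    else ε⁻¹ + ∑ ζ, ∑ η, φ ζ * h⁻¹ ζ η * φ η

section entries

variable (ε : ℝ) (h e : Matrix (Fin 2) (Fin 2) ℝ) (φ : Fin 2 → ℝ)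

@[simp]
lemma KK_apply_castSucc_castSucc (β α : Fin 2) :
    KK ε h φ β.castSucc α.castSucc = h β α + ε * φ β * φ α := by
  simp [KK, β.is_le, α.is_le]

@[simp]
lemma KK_apply_castSucc_two (β : Fin 2) : KK ε h φ β.castSucc 2 = ε * φ β := by
  simp [KK, β.is_le]

@[simp]
lemma KK_apply_two_castSucc (α : Fin 2) : KK ε h φ 2 α.castSucc = ε * φ α := by
  simp [KK, α.is_le]

@[simp]
lemma KK_apply_two_two : KK ε h φ 2 2 = ε := by
  simp [KK]

@[simp]
lemma KKinv_apply_castSucc_castSucc (β α : Fin 2) :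
    KKinv ε h φ β.castSucc α.castSucc = h⁻¹ β α := by
  simp [KKinv, β.is_le, α.is_le]

@[simp]
lemma KKinv_apply_castSucc_two (β : Fin 2) :
    KKinv ε h φ β.castSucc 2 = -(∑ ζ, h⁻¹ β ζ * φ ζ) := by
  simp [KKinv, β.is_le]

@[simp]
lemma Emat_apply_castSucc_castSucc (a α : Fin 2) :
    Emat ε e φ a.castSucc α.castSucc = e a α := by
  fin_cases a <;> fin_cases α <;> rfl

@[simp]
lemma Emat_apply_castSucc_two (a : Fin 2) : Emat ε e φ a.castSucc 2 = 0 := by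
  fin_cases a <;> rfl

@[simp]
lemma Etmat_apply_castSucc_two (α : Fin 2) : Etmat ε e φ α.castSucc 2 = 0 := by
  fin_cases α <;> rfl

@[simp]
lemma Etmat_apply_two_two : Etmat ε e φ 2 2 = (Real.sqrt ε)⁻¹ := rfl

end entries

lemma KK_mul_KKinv {ε : ℝ} (hε : ε ≠ 0) {h : Matrix (Fin 2) (Fin 2) ℝ} (hh : IsUnit h.det)
    (φ : Fin 2 → ℝ) : KK ε h φ * KKinv ε h φ = 1 := by
  have H := congrFun₂ (Matrix.mul_nonsing_inv h hh)
  simp only [Matrix.mul_apply, Fin.sum_univ_two, Matrix.one_apply] at H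
  have hεε : ε * ε⁻¹ = 1 := mul_inv_cancel₀ hε
  ext μ ν
  fin_cases μ <;> fin_cases ν <;>
    simp [KK, KKinv, Matrix.mul_apply, Fin.sum_univ_three, Fin.sum_univ_two] <;>
    grind

lemma inv_KK {ε : ℝ} (hε : ε ≠ 0) {h : Matrix (Fin 2) (Fin 2) ℝ} (hh : IsUnit h.det)
    (φ : Fin 2 → ℝ) : (KK ε h φ)⁻¹ = KKinv ε h φ :=
  Matrix.inv_eq_right_inv (KK_mul_KKinv hε hh φ)

lemma fderiv_single_eq_zero_of_update {ι E : Type*} [Fintype ι] [DecidableEq ι]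
    [NormedAddCommGroup E] [NormedSpace ℝ E] {F : (ι → ℝ) → E} {x : ι → ℝ} {i : ι}
    (hF : DifferentiableAt ℝ F x) (hind : ∀ t, F (Function.update x i t) = F x) :
    fderiv ℝ F x (Pi.single i 1) = 0 := by
  have hline : (fun t : ℝ => F (x + t • Pi.single i 1)) = fun _ => F x := by
    funext t
    rw [← hind (x i + t)]
    congr 1
    funext j
    by_cases hj : j = i <;> simp [Function.update, hj]
  rw [← hF.lineDeriv_eq_fderiv, lineDeriv, hline, deriv_const]

lemma pd_const_mul (μ : Fin 3) (c : ℝ) {f : (Fin 3 → ℝ) → ℝ} {x : Fin 3 → ℝ}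
    (hf : DifferentiableAt ℝ f x) : pd μ (fun y => c * f y) x = c * pd μ f x := by
  simp [pd, fderiv_const_mul hf]

lemma pd_const (μ : Fin 3) (c : ℝ) (x : Fin 3 → ℝ) : pd μ (fun _ => c) x = 0 := by
  simp [pd]

lemma chris_KK_castSucc_castSucc_two {ε : ℝ} (hε : ε ≠ 0)
    {hm : (Fin 3 → ℝ) → Matrix (Fin 2) (Fin 2) ℝ} {φf : (Fin 3 → ℝ) → Fin 2 → ℝ}
    {x : Fin 3 → ℝ} (hdiff : ∀ α β, DifferentiableAt ℝ (fun y => hm y α β) x)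
    (φdiff : ∀ α, DifferentiableAt ℝ (fun y => φf y α) x) (hinv : IsUnit (hm x).det)
    (hind : ∀ t, hm (Function.update x 2 t) = hm x)
    (φind : ∀ t, φf (Function.update x 2 t) = φf x) (α β : Fin 2) :
    chris (fun y => KK ε (hm y) (φf y)) x β.castSucc α.castSucc 2
      = ε / 2 * ∑ ρ, (hm x)⁻¹ β ρ * fs φf x α ρ := by
  have hφ2 : ∀ ρ, pd 2 (fun y => φf y ρ) x = 0 := fun ρ =>
    fderiv_single_eq_zero_of_update (φdiff ρ) fun t => congrFun (φind t) ρ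
  have hKK2 : ∀ ρ, pd 2 (fun y => hm y ρ α + ε * φf y ρ * φf y α) x = 0 := fun ρ =>
    fderiv_single_eq_zero_of_update ((hdiff ρ α).add (((φdiff ρ).const_mul ε).mul (φdiff α)))
      fun t => by simp only [hind, φind]
  have hlast : Fin.last 2 = 2 := rfl
  rw [chris, inv_KK hε hinv, Fin.sum_univ_castSucc, hlast]
  simp only [KK_apply_castSucc_castSucc, KK_apply_castSucc_two, KK_apply_two_castSucc,
    KK_apply_two_two, KKinv_apply_castSucc_castSucc, KKinv_apply_castSucc_two, hKK2,
    pd_const_mul _ _ (φdiff _), hφ2, pd_const, fs, mul_zero, zero_add, sub_self, add_zero]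
  rw [Finset.mul_sum, Finset.mul_sum]
  exact Finset.sum_congr rfl fun ρ _ => by ring

lemma spinConn_castSucc_castSucc_two (ε : ℝ) (hm : (Fin 3 → ℝ) → Matrix (Fin 2) (Fin 2) ℝ)
    (φf : (Fin 3 → ℝ) → Fin 2 → ℝ) (em : (Fin 3 → ℝ) → Matrix (Fin 2) (Fin 2) ℝ)
    (x : Fin 3 → ℝ) (α a : Fin 2) :
    spinConn ε hm φf em α.castSucc a.castSucc 2 x
      = (Real.sqrt ε)⁻¹ *
          ∑ β, em x a β * chris (fun y => KK ε (hm y) (φf y)) x β.castSucc α.castSucc 2 := by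
  have hlast : Fin.last 2 = 2 := rfl
  rw [spinConn, Fin.sum_univ_castSucc, hlast]
  simp only [Fin.sum_univ_castSucc (n := 2), hlast, Emat_apply_castSucc_castSucc,
    Emat_apply_castSucc_two, Etmat_apply_castSucc_two, Etmat_apply_two_two, pd_const,
    mul_zero, zero_mul, Finset.sum_const_zero, zero_add, add_zero, sub_zero, Finset.mul_sum]
  exact Finset.sum_congr rfl fun β _ => by ring

theorem stmt_15_general
    (ε : ℝ) (hε : 0 < ε)
    (hm : (Fin 3 → ℝ) → Matrix (Fin 2) (Fin 2) ℝ) (φf : (Fin 3 → ℝ) → Fin 2 → ℝ)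
    (hsm : ∀ α β, ContDiff ℝ (⊤ : ℕ∞) fun x => hm x α β)
    (φsm : ∀ α, ContDiff ℝ (⊤ : ℕ∞) fun x => φf x α)
    (hinv : ∀ x, IsUnit (hm x).det)
    (hind : ∀ x t, hm (Function.update x 2 t) = hm x)
    (φind : ∀ x t, φf (Function.update x 2 t) = φf x)
    (em : (Fin 3 → ℝ) → Matrix (Fin 2) (Fin 2) ℝ) :
    ∀ (x : Fin 3 → ℝ) (α a : Fin 2),
      spinConn ε hm φf em α.castSucc a.castSucc 2 x =
        Real.sqrt ε / 2 * ∑ δ, ∑ ζ, em x a δ * (hm x)⁻¹ δ ζ * fs φf x α ζ := by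
  intro x α a
  have hscale : (Real.sqrt ε)⁻¹ * (ε / 2) = Real.sqrt ε / 2 := by
    have := Real.sqrt_pos.2 hε
    field_simp
    rw [Real.sq_sqrt hε.le]
  rw [spinConn_castSucc_castSucc_two, Finset.mul_sum, Finset.mul_sum]
  refine Finset.sum_congr rfl fun δ _ => ?_
  rw [chris_KK_castSucc_castSucc_two hε.ne' (fun ρ σ => (hsm ρ σ).differentiable (by simp) x)
      (fun ρ => (φsm ρ).differentiable (by simp) x) (hinv x) (hind x) (φind x)]
  simp only [Finset.mul_sum]
  refine Finset.sum_congr rfl fun ζ _ => ?_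
  linear_combination (em x a δ * (hm x)⁻¹ δ ζ * fs φf x α ζ) * hscale

/-- the spin connection component [A_α]^a_2 equals
(√ε/2) e^a_δ h^{δζ} f_{αζ}. -/
theorem stmt_15
    (ε : ℝ) (hε : 0 < ε)
    (hm : (Fin 3 → ℝ) → Matrix (Fin 2) (Fin 2) ℝ) (φf : (Fin 3 → ℝ) → Fin 2 → ℝ)
    (hsm : ∀ α β, ContDiff ℝ (⊤ : ℕ∞) fun x => hm x α β)
    (φsm : ∀ α, ContDiff ℝ (⊤ : ℕ∞) fun x => φf x α)
    (hinv : ∀ x, IsUnit (hm x).det)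
    (hind : ∀ x t, hm (Function.update x 2 t) = hm x)
    (φind : ∀ x t, φf (Function.update x 2 t) = φf x)
    (em : (Fin 3 → ℝ) → Matrix (Fin 2) (Fin 2) ℝ)
    (esm : ∀ a α, ContDiff ℝ (⊤ : ℕ∞) fun x => em x a α)
    (einv : ∀ x, IsUnit (em x).det)
    (hZwei : ∀ x, (em x)ᵀ * em x = hm x) :
    ∀ (x : Fin 3 → ℝ) (α a : Fin 2),
      spinConn ε hm φf em α.castSucc a.castSucc 2 x =
        Real.sqrt ε / 2 * ∑ δ, ∑ ζ, em x a δ * (hm x)⁻¹ δ ζ * fs φf x α ζ :=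
  stmt_15_general ε hε hm φf hsm φsm hinv hind φind em
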